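/- arXiv:2105.02457 — 5 statements merged into one kernel-verified Lean document; each statement's English description precedes it below -/
import Mathlib

section
/- In a bipartite market with only eligibility constraints C^-, the matching produced by the First Ming greedy procedure (first match W^A workers to J^A jobs, then remaining W^A workers to J^{AB} jobs, then W^B workers to remaining J^{AB} jobs, then remaining W^B workers to J^B jobs) prioritizes high-levels: there is no feasible matching μ' with |μ'| ≥ |μ|, |μ'(J) ∩ W^A| ≥ |μ(J) ∩ W^A|, |μ'(J^A)| ≥ |μ(J^A)|, |μ'(J^{AB})| ≥ |μ(J^{AB})| with at least one inequality strict. -/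
/-!
A matching in this market is described by four cell counts `x₁ = |M(W^A, J^A)|`,
`x₂ = |M(W^A, J^{AB})|`, `y₁ = |M(W^B, J^{AB})|`, `y₂ = |M(W^B, J^B)|`, subject only to the
capacities `x₁ ≤ |J^A|`, `x₁ + x₂ ≤ |W^A|`, `x₂ + y₁ ≤ |J^{AB}|`, `y₁ + y₂ ≤ |W^B|`,
`y₂ ≤ |J^B|`. Each phase of First Ming fills its two tiers greedily: `n` workers facing `a` jobs of
the first tier and `b` of the second take `min n a` and `min (n - a) b` of them. Hence `μ`
maximizes `x₁`, then `x₁ + x₂`, then `x₂ + y₁`, then the total, each given the previous ones, and a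
matching weakly above `μ` in the four statistics agrees with it in all of them.
-/

section GreedyDefs

variable {W J : Type} [DecidableEq W] [DecidableEq J]

/-- One step of the greedy assignment: worker `w` is matched to the first job in
his priority list that is compatible with him and still available. -/
def greedyStep (C : W → J → Bool) (pref : W → List J)
    (st : List (W × J) × Finset J) (w : W) : List (W × J) × Finset J :=
  match (pref w).find? (fun j => C w j && decide (j ∈ st.2)) with
  | some j => (st.1 ++ [(w, j)], st.2.erase j)
  | none => st

/-- The greedy sequential procedure: workers are processed in `order`, each
irrevocably matched to his highest-priority available compatible job (if any). -/
def greedy (C : W → J → Bool) (order : List W) (pref : W → List J)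
    (jobs : Finset J) : List (W × J) :=
  (order.foldl (greedyStep C pref) ([], jobs)).1

/-- A feasible matching: compatible pairs, injective on workers and on jobs. -/
def IsMatching (C : W → J → Bool) (M : Finset (W × J)) : Prop :=
  (∀ p ∈ M, C p.1 p.2 = true) ∧
  (∀ p ∈ M, ∀ q ∈ M, p.1 = q.1 → p = q) ∧
  (∀ p ∈ M, ∀ q ∈ M, p.2 = q.2 → p = q)

/-- `l` enumerates the finite set `S` (each element exactly once). -/
def Enum {α : Type} [DecidableEq α] (l : List α) (S : Finset α) : Prop :=
  l.Nodup ∧ l.toFinset = S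

end GreedyDefs

/-- Number of workers from `S` matched under `M`. -/
def matchedWorkers (S : Finset ℕ) (M : Finset (ℕ × ℕ)) : ℕ :=
  (M.filter fun p => p.1 ∈ S).card

/-- Number of jobs from `S` matched under `M` (i.e. `|μ(S)|`). -/
def matchedJobs (S : Finset ℕ) (M : Finset (ℕ × ℕ)) : ℕ :=
  (M.filter fun p => p.2 ∈ S).card

section Greedy

variable {W J : Type} [DecidableEq J] (C : W → J → Bool) (pref : W → List J)

theorem greedyStep_eq_or (s : List (W × J) × Finset J) (w : W) :
    greedyStep C pref s w = s ∨
      ∃ j ∈ s.2, C w j = true ∧ greedyStep C pref s w = (s.1 ++ [(w, j)], s.2.erase j) := by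
  unfold greedyStep
  split
  · next j hj =>
    have hj := List.find?_some hj
    simp only [Bool.and_eq_true, decide_eq_true_eq] at hj
    exact Or.inr ⟨j, hj.2, hj.1, rfl⟩
  · exact Or.inl rfl

theorem card_erase_inter_of_mem {s T : Finset J} {j : J} (hj : j ∈ s ∩ T) :
    (s.erase j ∩ T).card = (s ∩ T).card - 1 := by
  rw [Finset.erase_inter, Finset.card_erase_of_mem hj]

theorem erase_inter_of_notMem {s T : Finset J} {j : J} (hj : j ∉ T) :
    s.erase j ∩ T = s ∩ T := by
  rw [Finset.erase_inter, Finset.erase_eq_of_notMem (fun h => hj (Finset.mem_inter.1 h).2)]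

theorem card_erase_inter_add {s : Finset J} {j : J} (hj : j ∈ s) (T : Finset J) :
    (s.erase j ∩ T).card + (if j ∈ T then 1 else 0) = (s ∩ T).card := by
  split_ifs with hjT
  · rw [Finset.erase_inter, Finset.card_erase_add_one (Finset.mem_inter.2 ⟨hj, hjT⟩)]
  · rw [erase_inter_of_notMem hjT, add_zero]

theorem exists_foldl_greedyStep (order : List W) (s : List (W × J) × Finset J) :
    ∃ P : List (W × J), (order.foldl (greedyStep C pref) s).1 = s.1 ++ P ∧
      (P.map Prod.fst).Sublist order ∧ (∀ p ∈ P, C p.1 p.2 = true) ∧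
      ∀ T, P.countP (fun p => p.2 ∈ T) + ((order.foldl (greedyStep C pref) s).2 ∩ T).card =
        (s.2 ∩ T).card := by
  induction order generalizing s with
  | nil => exact ⟨[], by simp, by simp, by simp, by simp⟩
  | cons w order ih =>
    rcases greedyStep_eq_or C pref s w with hs | ⟨j, hjs, hCj, hs⟩
    · obtain ⟨P, hP, hsub, hC, hcount⟩ := ih s
      refine ⟨P, ?_, hsub.cons w, hC, ?_⟩ <;> simpa [hs]
    · obtain ⟨P, hP, hsub, hC, hcount⟩ := ih (s.1 ++ [(w, j)], s.2.erase j)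
      refine ⟨(w, j) :: P, ?_, hsub.cons_cons w, ?_, fun T => ?_⟩
      · simp [hs, hP]
      · simpa [hCj] using hC
      · rw [List.foldl_cons, hs, ← card_erase_inter_add hjs T, ← hcount T, List.countP_cons]
        simp only [decide_eq_true_eq]
        ring

def IsTwoTier (S1 S2 : Finset J) (w : W) : Prop :=
  (∀ j, C w j = true ↔ j ∈ S1 ∨ j ∈ S2) ∧
    ∃ l1 l2, pref w = l1 ++ l2 ∧ l1.toFinset = S1 ∧ l2.toFinset = S2

variable {C pref}

-- Truncated subtraction: the second tier loses a job only when the first one is exhausted.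
theorem IsTwoTier.card_inter_greedyStep {S1 S2 : Finset J} (hS : Disjoint S1 S2) {w : W}
    (hw : IsTwoTier C pref S1 S2 w) (s : List (W × J) × Finset J) :
    ((greedyStep C pref s w).2 ∩ S1).card = (s.2 ∩ S1).card - 1 ∧
      ((greedyStep C pref s w).2 ∩ S2).card = (s.2 ∩ S2).card - (1 - (s.2 ∩ S1).card) ∧
      ∀ T, Disjoint T (S1 ∪ S2) → (greedyStep C pref s w).2 ∩ T = s.2 ∩ T := by
  obtain ⟨hC, l1, l2, hpref, rfl, rfl⟩ := hw
  unfold greedyStep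
  set p : J → Bool := fun j => C w j && decide (j ∈ s.2) with hp
  have avail : ∀ j, p j = true ↔ j ∈ s.2 ∧ (j ∈ l1 ∨ j ∈ l2) := by
    simp [hp, hC, and_comm]
  have notMem : ∀ T : Finset J, Disjoint T (l1.toFinset ∪ l2.toFinset) → ∀ j,
      (j ∈ l1 ∨ j ∈ l2) → j ∉ T := fun T hT j hj hjT =>
    Finset.disjoint_left.1 hT hjT (by simpa using hj)
  rw [hpref, List.find?_append]
  rcases h1 : l1.find? _ with _ | j
  · have empty1 : s.2 ∩ l1.toFinset = ∅ := by
      refine Finset.eq_empty_of_forall_notMem fun j hj => ?_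
      simp only [Finset.mem_inter, List.mem_toFinset] at hj
      exact List.find?_eq_none.1 h1 j hj.2 ((avail j).2 ⟨hj.1, Or.inl hj.2⟩)
    rcases h2 : l2.find? _ with _ | j
    · have empty2 : s.2 ∩ l2.toFinset = ∅ := by
        refine Finset.eq_empty_of_forall_notMem fun j hj => ?_
        simp only [Finset.mem_inter, List.mem_toFinset] at hj
        exact List.find?_eq_none.1 h2 j hj.2 ((avail j).2 ⟨hj.1, Or.inr hj.2⟩)
      simp [empty1, empty2]
    · obtain ⟨hjs, hj⟩ := (avail j).1 (List.find?_some h2)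
      have hj2 := List.mem_of_find?_eq_some h2
      have hj1 : j ∉ l1.toFinset := Finset.disjoint_right.1 hS (List.mem_toFinset.2 hj2)
      refine ⟨?_, ?_, fun T hT => erase_inter_of_notMem (notMem T hT j hj)⟩
      · simp [erase_inter_of_notMem hj1, empty1]
      · simp only [Option.none_or, card_erase_inter_of_mem
          (Finset.mem_inter.2 ⟨hjs, List.mem_toFinset.2 hj2⟩), empty1, Finset.card_empty]
  · obtain ⟨hjs, hj⟩ := (avail j).1 (List.find?_some h1)
    have hj1 := Finset.mem_inter.2 ⟨hjs, List.mem_toFinset.2 (List.mem_of_find?_eq_some h1)⟩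
    have hj2 : j ∉ l2.toFinset := Finset.disjoint_left.1 hS (Finset.mem_inter.1 hj1).2
    refine ⟨card_erase_inter_of_mem hj1, ?_, fun T hT => erase_inter_of_notMem (notMem T hT j hj)⟩
    have : 0 < (s.2 ∩ l1.toFinset).card := Finset.card_pos.2 ⟨j, hj1⟩
    simp only [Option.some_or, erase_inter_of_notMem hj2]
    omega

theorem card_inter_foldl_greedyStep {S1 S2 : Finset J} (hS : Disjoint S1 S2) {order : List W}
    (horder : ∀ w ∈ order, IsTwoTier C pref S1 S2 w) (s : List (W × J) × Finset J) :
    ((order.foldl (greedyStep C pref) s).2 ∩ S1).card = (s.2 ∩ S1).card - order.length ∧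
      ((order.foldl (greedyStep C pref) s).2 ∩ S2).card =
        (s.2 ∩ S2).card - (order.length - (s.2 ∩ S1).card) ∧
      ∀ T, Disjoint T (S1 ∪ S2) → (order.foldl (greedyStep C pref) s).2 ∩ T = s.2 ∩ T := by
  induction order generalizing s with
  | nil => simp
  | cons w order ih =>
    obtain ⟨step1, step2, stepT⟩ := (horder w (by simp)).card_inter_greedyStep hS s
    obtain ⟨ih1, ih2, ihT⟩ := ih (fun w hw => horder w (by simp [hw])) (greedyStep C pref s w)
    simp only [List.foldl_cons, List.length_cons]
    refine ⟨by omega, by omega, fun T hT => (ihT T hT).trans (stepT T hT)⟩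

theorem exists_foldl_greedyStep_of_isTwoTier {S1 S2 : Finset J} (hS : Disjoint S1 S2)
    {order : List W} (horder : ∀ w ∈ order, IsTwoTier C pref S1 S2 w)
    (s : List (W × J) × Finset J) :
    ∃ P : List (W × J), (order.foldl (greedyStep C pref) s).1 = s.1 ++ P ∧
      (P.map Prod.fst).Sublist order ∧
      P.countP (fun p => p.2 ∈ S1) = min order.length (s.2 ∩ S1).card ∧
      P.countP (fun p => p.2 ∈ S2) = min (order.length - (s.2 ∩ S1).card) (s.2 ∩ S2).card ∧
      P.length = P.countP (fun p => p.2 ∈ S1) + P.countP (fun p => p.2 ∈ S2) ∧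
      ((order.foldl (greedyStep C pref) s).2 ∩ S2).card =
        (s.2 ∩ S2).card - (order.length - (s.2 ∩ S1).card) ∧
      ∀ T, Disjoint T (S1 ∪ S2) →
        P.countP (fun p => p.2 ∈ T) = 0 ∧ (order.foldl (greedyStep C pref) s).2 ∩ T = s.2 ∩ T := by
  obtain ⟨P, hP, hsub, hC, hcount⟩ := exists_foldl_greedyStep C pref order s
  obtain ⟨h1, h2, hT⟩ := card_inter_foldl_greedyStep hS horder s
  have hjob : ∀ p ∈ P, p.2 ∈ S1 ∨ p.2 ∈ S2 := fun p hp =>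
    ((horder p.1 (hsub.subset (List.mem_map_of_mem hp))).1 _).1 (hC p hp)
  have c1 := hcount S1
  have c2 := hcount S2
  refine ⟨P, hP, hsub, by omega, by omega, ?_, h2, fun T hTS => ⟨?_, hT T hTS⟩⟩
  · rw [List.length_eq_countP_add_countP (fun p => p.2 ∈ S1)]
    congr 1
    refine List.countP_congr fun p hp => ?_
    have : p.2 ∈ S1 → p.2 ∉ S2 := fun h => Finset.disjoint_left.1 hS h
    have := hjob p hp
    simp only [decide_eq_true_eq]
    tauto
  · have := hcount T
    rw [hT T hTS] at this
    omega

end Greedy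

theorem Enum.length_eq {α : Type} [DecidableEq α] {l : List α} {S : Finset α} (h : Enum l S) :
    l.length = S.card := by
  rw [← h.2, List.toFinset_card_of_nodup h.1]

theorem isTwoTier_of_enum {W J : Type} [DecidableEq J] {C : W → J → Bool} {pref : W → List J}
    {S1 S2 : Finset J} {w : W}
    (hpref : ∃ l1 l2, pref w = l1 ++ l2 ∧ Enum l1 S1 ∧ Enum l2 S2)
    (hC : ∀ j, C w j = true ↔ j ∈ S1 ∨ j ∈ S2) : IsTwoTier C pref S1 S2 w :=
  let ⟨l1, l2, hp, h1, h2⟩ := hpref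
  ⟨hC, l1, l2, hp, h1.2, h2.2⟩

theorem card_filter_toFinset_of_nodup {α : Type} [DecidableEq α] {l : List α} (hl : l.Nodup)
    (p : α → Prop) [DecidablePred p] : (l.toFinset.filter p).card = l.countP (fun a => p a) := by
  rw [List.countP_eq_length_filter, ← List.toFinset_card_of_nodup (hl.filter _),
    List.toFinset_filter]
  simp

section Matching

variable {M : Finset (ℕ × ℕ)}

theorem matchedJobs_toFinset {l : List (ℕ × ℕ)} (hl : l.Nodup) (T : Finset ℕ) :
    matchedJobs T l.toFinset = l.countP (fun p => p.2 ∈ T) :=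
  card_filter_toFinset_of_nodup hl _

theorem matchedWorkers_toFinset {l : List (ℕ × ℕ)} (hl : l.Nodup) (S : Finset ℕ) :
    matchedWorkers S l.toFinset = l.countP (fun p => p.1 ∈ S) :=
  card_filter_toFinset_of_nodup hl _

theorem matchedWorkers_le_card (hinj : ∀ p ∈ M, ∀ q ∈ M, p.1 = q.1 → p = q) (S : Finset ℕ) :
    matchedWorkers S M ≤ S.card :=
  Finset.card_le_card_of_injOn Prod.fst (fun _ hp => (Finset.mem_filter.1 hp).2)
    fun p hp q hq => hinj p (Finset.mem_filter.1 hp).1 q (Finset.mem_filter.1 hq).1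

theorem matchedJobs_le_card (hinj : ∀ p ∈ M, ∀ q ∈ M, p.2 = q.2 → p = q) (T : Finset ℕ) :
    matchedJobs T M ≤ T.card :=
  Finset.card_le_card_of_injOn Prod.snd (fun _ hp => (Finset.mem_filter.1 hp).2)
    fun p hp q hq => hinj p (Finset.mem_filter.1 hp).1 q (Finset.mem_filter.1 hq).1

theorem matchedJobs_le_matchedWorkers {S T : Finset ℕ} (h : ∀ p ∈ M, p.2 ∈ T → p.1 ∈ S) :
    matchedJobs T M ≤ matchedWorkers S M :=
  Finset.card_le_card fun p hp => by
    rw [Finset.mem_filter] at hp ⊢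
    exact ⟨hp.1, h p hp.1 hp.2⟩

theorem matchedWorkers_le_matchedJobs_add {S T₁ T₂ : Finset ℕ}
    (h : ∀ p ∈ M, p.1 ∈ S → p.2 ∈ T₁ ∨ p.2 ∈ T₂) :
    matchedWorkers S M ≤ matchedJobs T₁ M + matchedJobs T₂ M := by
  refine (Finset.card_le_card fun p hp => ?_).trans (Finset.card_union_le _ _)
  rw [Finset.mem_filter] at hp
  rw [Finset.mem_union, Finset.mem_filter, Finset.mem_filter]
  have := h p hp.1 hp.2
  tauto

theorem matchedJobs_add_matchedJobs_le_card {T₁ T₂ : Finset ℕ} (h : Disjoint T₁ T₂) :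
    matchedJobs T₁ M + matchedJobs T₂ M ≤ M.card := by
  rw [matchedJobs, matchedJobs, ← Finset.card_union_of_disjoint
    (Finset.disjoint_filter.2 fun _ _ h₁ h₂ => Finset.disjoint_left.1 h h₁ h₂)]
  exact Finset.card_le_card (Finset.union_subset (Finset.filter_subset _ _)
    (Finset.filter_subset _ _))

theorem card_le_matchedWorkers_add {S₁ S₂ : Finset ℕ} (h : ∀ p ∈ M, p.1 ∈ S₁ ∨ p.1 ∈ S₂) :
    M.card ≤ matchedWorkers S₁ M + matchedWorkers S₂ M := by
  refine (Finset.card_le_card fun p hp => ?_).trans (Finset.card_union_le _ _)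
  rw [Finset.mem_union, Finset.mem_filter, Finset.mem_filter]
  have := h p hp
  tauto

theorem card_le_matchedJobs_add_add {T₁ T₂ T₃ : Finset ℕ}
    (h : ∀ p ∈ M, p.2 ∈ T₁ ∨ p.2 ∈ T₂ ∨ p.2 ∈ T₃) :
    M.card ≤ matchedJobs T₁ M + matchedJobs T₂ M + matchedJobs T₃ M := by
  refine (Finset.card_le_card fun p hp => ?_).trans
    ((Finset.card_union_le _ _).trans (Nat.add_le_add_right (Finset.card_union_le _ _) _))
  rw [Finset.mem_union, Finset.mem_union, Finset.mem_filter, Finset.mem_filter,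
    Finset.mem_filter]
  have := h p hp
  tauto

end Matching

section FirstMing

variable {WA WB JA JAB JB : Finset ℕ} {C : ℕ → ℕ → Bool}

theorem IsMatching.matched_bounds (hW : Disjoint WA WB) (hJ1 : Disjoint JA JAB)
    (hJ2 : Disjoint JA JB)
    (hC : ∀ w j, C w j = true ↔
      ((w ∈ WA ∧ (j ∈ JA ∨ j ∈ JAB)) ∨ (w ∈ WB ∧ (j ∈ JAB ∨ j ∈ JB))))
    {M : Finset (ℕ × ℕ)} (hM : IsMatching C M) :
    matchedJobs JA M ≤ JA.card ∧ matchedJobs JAB M ≤ JAB.card ∧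
      matchedWorkers WA M ≤ WA.card ∧ matchedJobs JA M ≤ matchedWorkers WA M ∧
      matchedWorkers WA M ≤ matchedJobs JA M + matchedJobs JAB M ∧
      M.card ≤ matchedWorkers WA M + WB.card ∧
      M.card ≤ matchedJobs JA M + matchedJobs JAB M + JB.card ∧
      matchedJobs JA M + matchedJobs JAB M ≤ M.card := by
  obtain ⟨hCM, hinjW, hinjJ⟩ := hM
  have hpair : ∀ p ∈ M, (p.1 ∈ WA ∧ (p.2 ∈ JA ∨ p.2 ∈ JAB)) ∨
      (p.1 ∈ WB ∧ (p.2 ∈ JAB ∨ p.2 ∈ JB)) := fun p hp => (hC p.1 p.2).1 (hCM p hp)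
  have card_le := card_le_matchedWorkers_add (S₁ := WA) (S₂ := WB) fun p hp => by
    have := hpair p hp; tauto
  have := matchedWorkers_le_card hinjW WB
  refine ⟨matchedJobs_le_card hinjJ JA, matchedJobs_le_card hinjJ JAB,
    matchedWorkers_le_card hinjW WA, matchedJobs_le_matchedWorkers fun p hp hJA => ?_,
    matchedWorkers_le_matchedJobs_add fun p hp hWA => ?_, by omega,
    (card_le_matchedJobs_add_add fun p hp => ?_).trans
      (Nat.add_le_add_left (matchedJobs_le_card hinjJ JB) _),
    matchedJobs_add_matchedJobs_le_card hJ1⟩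
  · have := Finset.disjoint_left.1 hJ1 hJA
    have := Finset.disjoint_left.1 hJ2 hJA
    have := hpair p hp
    tauto
  · have := Finset.disjoint_left.1 hW hWA
    have := hpair p hp
    tauto
  · have := hpair p hp
    tauto

theorem greedy_matched_eq (hW : Disjoint WA WB) (hJ1 : Disjoint JA JAB) (hJ2 : Disjoint JA JB)
    (hJ3 : Disjoint JAB JB)
    (hC : ∀ w j, C w j = true ↔
      ((w ∈ WA ∧ (j ∈ JA ∨ j ∈ JAB)) ∨ (w ∈ WB ∧ (j ∈ JAB ∨ j ∈ JB))))
    {orderA orderB : List ℕ} (hoA : Enum orderA WA) (hoB : Enum orderB WB) {pref : ℕ → List ℕ}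
    (hprefA : ∀ w ∈ WA, ∃ l1 l2, pref w = l1 ++ l2 ∧ Enum l1 JA ∧ Enum l2 JAB)
    (hprefB : ∀ w ∈ WB, ∃ l1 l2, pref w = l1 ++ l2 ∧ Enum l1 JAB ∧ Enum l2 JB) :
    let μ := (greedy C (orderA ++ orderB) pref (JA ∪ JAB ∪ JB)).toFinset
    matchedJobs JA μ = min WA.card JA.card ∧
      matchedWorkers WA μ = min WA.card (JA.card + JAB.card) ∧
      matchedJobs JAB μ = min JAB.card (min (WA.card - JA.card) JAB.card + WB.card) ∧
      μ.card = min WA.card (JA.card + JAB.card) +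
        min WB.card (JAB.card - min (WA.card - JA.card) JAB.card + JB.card) := by
  intro μ
  have memA : ∀ w ∈ orderA, w ∈ WA := fun w hw => hoA.2 ▸ List.mem_toFinset.2 hw
  have memB : ∀ w ∈ orderB, w ∈ WB := fun w hw => hoB.2 ▸ List.mem_toFinset.2 hw
  have tierA : ∀ w ∈ orderA, IsTwoTier C pref JA JAB w := fun w hw =>
    isTwoTier_of_enum (hprefA w (memA w hw)) fun j => by
      simp [hC, memA w hw, Finset.disjoint_left.1 hW (memA w hw)]
  have tierB : ∀ w ∈ orderB, IsTwoTier C pref JAB JB w := fun w hw =>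
    isTwoTier_of_enum (hprefB w (memB w hw)) fun j => by
      simp [hC, memB w hw, Finset.disjoint_right.1 hW (memB w hw)]
  set s₀ : List (ℕ × ℕ) × Finset ℕ := ([], JA ∪ JAB ∪ JB)
  obtain ⟨PA, hPA, subA, countA1, countA2, lenA, R1JAB, untouchedA⟩ :=
    exists_foldl_greedyStep_of_isTwoTier hJ1 tierA s₀
  obtain ⟨PB, hPB, subB, countB1, countB2, lenB, -, untouchedB⟩ :=
    exists_foldl_greedyStep_of_isTwoTier hJ3 tierB (orderA.foldl (greedyStep C pref) s₀)
  obtain ⟨countAJB, R1JB⟩ := untouchedA JB (Finset.disjoint_union_right.2 ⟨hJ2.symm, hJ3.symm⟩)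
  have countBJA := (untouchedB JA (Finset.disjoint_union_right.2 ⟨hJ1, hJ2⟩)).1
  have hG : greedy C (orderA ++ orderB) pref (JA ∪ JAB ∪ JB) = PA ++ PB := by
    rw [greedy, List.foldl_append, hPB, hPA]
    rfl
  have hnodup : (PA ++ PB).Nodup := by
    refine List.Nodup.of_map Prod.fst ((List.map_append ▸ subA.append subB).nodup ?_)
    exact List.nodup_append.2 ⟨hoA.1, hoB.1, fun a ha b hb hab =>
      Finset.disjoint_left.1 hW (memA a ha) (hab ▸ memB b hb)⟩
  have workersA : PA.countP (fun p => p.1 ∈ WA) = PA.length :=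
    List.countP_eq_length.2 fun p hp => by
      simpa using memA p.1 (subA.subset (List.mem_map_of_mem hp))
  have workersB : PB.countP (fun p => p.1 ∈ WA) = 0 :=
    List.countP_eq_zero.2 fun p hp => by
      simpa using Finset.disjoint_right.1 hW (memB p.1 (subB.subset (List.mem_map_of_mem hp)))
  simp only [μ, hG, matchedJobs_toFinset hnodup, matchedWorkers_toFinset hnodup,
    List.toFinset_card_of_nodup hnodup, List.countP_append, List.length_append, workersA,
    workersB]
  have hJA : (JA ∪ JAB ∪ JB) ∩ JA = JA := by ext; simp +contextual
  have hJAB : (JA ∪ JAB ∪ JB) ∩ JAB = JAB := by ext; simp +contextual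
  have hJB : (JA ∪ JAB ∪ JB) ∩ JB = JB := by ext; simp +contextual
  simp only [s₀, hJA, hJAB, hJB, hoA.length_eq, hoB.length_eq, R1JB]
    at countA1 countA2 R1JAB countB1 countB2
  omega

end FirstMing

/-- With eligibility-only compatibility `C⁻`, the First Ming greedy procedure
(first `W^A` workers to `J^A` jobs, then remaining `W^A` to `J^{AB}`, then `W^B` to remaining
`J^{AB}`, then to `J^B`) produces a matching `μ` that prioritizes high-levels: no feasible
matching weakly improves all four statistics `|μ|`, `|μ(J) ∩ W^A|`, `|μ(J^A)|`, `|μ(J^{AB})|`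
with at least one strict improvement. -/
theorem stmt4
    (WA WB JA JAB JB : Finset ℕ)
    (hW : Disjoint WA WB)
    (hJ1 : Disjoint JA JAB) (hJ2 : Disjoint JA JB) (hJ3 : Disjoint JAB JB)
    (C : ℕ → ℕ → Bool)
    (hC : ∀ w j, C w j = true ↔
      ((w ∈ WA ∧ (j ∈ JA ∨ j ∈ JAB)) ∨ (w ∈ WB ∧ (j ∈ JAB ∨ j ∈ JB))))
    (orderA orderB : List ℕ)
    (hoA : Enum orderA WA) (hoB : Enum orderB WB)
    (pref : ℕ → List ℕ)
    (hprefA : ∀ w ∈ WA, ∃ l1 l2, pref w = l1 ++ l2 ∧ Enum l1 JA ∧ Enum l2 JAB)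
    (hprefB : ∀ w ∈ WB, ∃ l1 l2, pref w = l1 ++ l2 ∧ Enum l1 JAB ∧ Enum l2 JB) :
    ¬ ∃ M : Finset (ℕ × ℕ), IsMatching C M ∧
      (let μ := (greedy C (orderA ++ orderB) pref (JA ∪ JAB ∪ JB)).toFinset
       μ.card ≤ M.card ∧
       matchedWorkers WA μ ≤ matchedWorkers WA M ∧
       matchedJobs JA μ ≤ matchedJobs JA M ∧
       matchedJobs JAB μ ≤ matchedJobs JAB M ∧
       (μ.card < M.card ∨ matchedWorkers WA μ < matchedWorkers WA M ∨
        matchedJobs JA μ < matchedJobs JA M ∨ matchedJobs JAB μ < matchedJobs JAB M)) := by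
  rintro ⟨M, hM, hle⟩
  obtain ⟨greedyJA, greedyWA, greedyJAB, greedyCard⟩ :=
    greedy_matched_eq hW hJ1 hJ2 hJ3 hC hoA hoB hprefA hprefB
  have := hM.matched_bounds hW hJ1 hJ2 hC
  dsimp only at hle greedyJA greedyWA greedyJAB greedyCard
  omega
end

section
/- For every n ≥ 1 there exists a market with |W^A| = |J^A| = |J^{AB}| = n and |W^B| = n (J^B empty) and an assignment plan such that the sequential worker-choice procedure (W^A workers processed first, each taking their top available compatible job, with all W^A workers ranking J^{AB} jobs above J^A jobs) produces a matching μ that does not prioritize high-levels: specifically, the matching μ' pairing all W^A workers with J^A jobs and all W^B workers with J^{AB} jobs satisfies |μ'| = 2n > n = |μ|, hence μ' prioritizes more high-levels than μ. -/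
section Greedy

variable {W J : Type} [DecidableEq J] {C : W → J → Bool} {pref : W → List J}

theorem foldl_greedyStep_of_forall_not_mem (ws : List W) (st : List (W × J) × Finset J)
    (h : ∀ w ∈ ws, ∀ j ∈ pref w, C w j = true → j ∉ st.2) :
    ws.foldl (greedyStep C pref) st = st := by
  induction ws with
  | nil => rfl
  | cons w ws ih =>
    have hnone : (pref w).find? (fun j => C w j && decide (j ∈ st.2)) = none := by
      simpa [List.find?_eq_none] using h w List.mem_cons_self
    rw [List.foldl_cons, greedyStep, hnone]
    exact ih fun w' hw' => h w' (List.mem_cons_of_mem w hw')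

/-- `Q` holds the jobs taken by earlier workers sharing the same ranking; carrying it along is
what makes the induction go through. -/
theorem foldl_greedyStep_eq_zip (ws : List W) (Q P R : List J) (acc : List (W × J))
    (S : Finset J) (hlen : ws.length = P.length) (hP : P.Nodup)
    (hpref : ∀ w ∈ ws, pref w = Q ++ P ++ R) (hQS : ∀ j ∈ Q, j ∉ S) (hPS : ∀ j ∈ P, j ∈ S)
    (hC : ∀ w ∈ ws, ∀ j ∈ P, C w j = true) :
    ws.foldl (greedyStep C pref) (acc, S) = (acc ++ ws.zip P, S \ P.toFinset) := by
  induction ws generalizing Q P acc S with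
  | nil =>
    obtain rfl : P = [] := List.length_eq_zero_iff.mp hlen.symm
    simp
  | cons w ws ih =>
    obtain _ | ⟨p, P⟩ := P
    · simp at hlen
    have hp : p ∉ P := (List.nodup_cons.mp hP).1
    have hfind : (pref w).find? (fun j => C w j && decide (j ∈ S)) = some p := by
      rw [List.find?_eq_some_iff_append]
      refine ⟨by simp [hC w List.mem_cons_self p List.mem_cons_self, hPS p List.mem_cons_self],
        Q, P ++ R, by simp [hpref w List.mem_cons_self], fun j hj => by simp [hQS j hj]⟩
    rw [List.foldl_cons, greedyStep, hfind, ih (Q ++ [p]) P _ _ (by simpa using hlen) (List.nodup_cons.mp hP).2]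
    · ext j
      · simp
      · simp [Finset.sdiff_insert, and_assoc]
    · intro w' hw'; simp [hpref w' (List.mem_cons_of_mem w hw')]
    · intro j hj
      rcases List.mem_append.mp hj with hj | hj
      · exact fun h => hQS j hj (Finset.mem_of_mem_erase h)
      · simp [List.mem_singleton.mp hj]
    · intro j hj
      exact Finset.mem_erase.mpr ⟨by rintro rfl; exact hp hj, hPS j (List.mem_cons_of_mem p hj)⟩
    · exact fun w' hw' j hj => hC w' (List.mem_cons_of_mem w hw') j (List.mem_cons_of_mem p hj)

theorem greedy_append_eq_zip (wsA wsB : List W) (P R : List J) (S : Finset J)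
    (hlen : wsA.length = P.length) (hP : P.Nodup) (hpref : ∀ w ∈ wsA, pref w = P ++ R)
    (hPS : ∀ j ∈ P, j ∈ S) (hCA : ∀ w ∈ wsA, ∀ j ∈ P, C w j = true)
    (hCB : ∀ w ∈ wsB, ∀ j, C w j = true → j ∈ P) :
    greedy C (wsA ++ wsB) pref S = wsA.zip P := by
  rw [greedy, List.foldl_append,
    foldl_greedyStep_eq_zip wsA [] P R [] S hlen hP (by simpa using hpref) (by simp) hPS hCA,
    foldl_greedyStep_of_forall_not_mem]
  · simp
  · intro w hw j _ hj
    simp [hCB w hw j hj]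

end Greedy

def marketCompat {W J : Type} [DecidableEq W] [DecidableEq J] (WA WB : Finset W)
    (JA JAB : Finset J) (w : W) (j : J) : Bool :=
  decide ((w ∈ WA ∧ (j ∈ JA ∨ j ∈ JAB)) ∨ (w ∈ WB ∧ j ∈ JAB))

theorem enum_range' {a n b : ℕ} (h : a + n = b) : Enum (List.range' a n) (Finset.Ico a b) :=
  ⟨List.nodup_range', by ext; simp [List.mem_range'_1]; omega⟩

def offsetPairs (a b n : ℕ) : Finset (ℕ × ℕ) :=
  (Finset.range n).image fun k => (a + k, b + k)

theorem mem_offsetPairs {a b n : ℕ} {p : ℕ × ℕ} :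
    p ∈ offsetPairs a b n ↔ a ≤ p.1 ∧ p.1 < a + n ∧ p.2 + a = p.1 + b := by
  simp only [offsetPairs, Finset.mem_image, Finset.mem_range]
  constructor
  · rintro ⟨k, hk, rfl⟩; simp only; omega
  · intro h; exact ⟨p.1 - a, by omega, Prod.ext (by simp only; omega) (by simp only; omega)⟩

theorem card_offsetPairs (a b n : ℕ) : (offsetPairs a b n).card = n := by
  rw [offsetPairs, Finset.card_image_of_injective _ fun k l h => by simpa using congrArg Prod.fst h,
    Finset.card_range]

theorem toFinset_zip_range' (a b n : ℕ) :
    ((List.range' a n).zip (List.range' b n)).toFinset = offsetPairs a b n := by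
  induction n generalizing a b with
  | zero => rfl
  | succ n ih =>
    rw [List.range'_succ, List.range'_succ, List.zip_cons_cons, List.toFinset_cons, ih]
    ext p
    simp only [Finset.mem_insert, mem_offsetPairs, Prod.ext_iff]
    omega

section Example

variable (n : ℕ)

/-- Workers `0, …, n - 1` form `W^A` and `n, …, 2n - 1` form `W^B`; jobs `2n, …, 3n - 1` form
`J^A` and `3n, …, 4n - 1` form `J^{AB}`. -/
def exampleCompat : ℕ → ℕ → Bool :=
  marketCompat (Finset.Ico 0 n) (Finset.Ico n (2 * n)) (Finset.Ico (2 * n) (3 * n))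
    (Finset.Ico (3 * n) (4 * n))

def exampleRanking : List ℕ := List.range' (3 * n) n ++ List.range' (2 * n) n

theorem toFinset_greedy_example :
    (greedy (exampleCompat n) (List.range' 0 n ++ List.range' n n) (fun _ => exampleRanking n)
      (Finset.Ico (2 * n) (3 * n) ∪ Finset.Ico (3 * n) (4 * n))).toFinset =
    offsetPairs 0 (3 * n) n := by
  rw [greedy_append_eq_zip (pref := fun _ => exampleRanking n) _ _ _ (List.range' (2 * n) n) _
    (by simp) List.nodup_range' (fun _ _ => rfl), toFinset_zip_range']
  · intro j hj
    simp only [List.mem_range'_1] at hj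
    simp only [Finset.mem_union, Finset.mem_Ico]; omega
  · intro w hw j hj
    simp only [List.mem_range'_1] at hw hj
    simp only [exampleCompat, marketCompat, Finset.mem_Ico, decide_eq_true_eq]; omega
  · intro w hw j hj
    simp only [List.mem_range'_1] at hw ⊢
    simp only [exampleCompat, marketCompat, Finset.mem_Ico, decide_eq_true_eq] at hj; omega

theorem isMatching_example : IsMatching (exampleCompat n) (offsetPairs 0 (2 * n) (2 * n)) := by
  refine ⟨fun p hp => ?_, fun p hp q hq h => ?_, fun p hp q hq h => ?_⟩
  · rw [mem_offsetPairs] at hp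
    simp only [exampleCompat, marketCompat, Finset.mem_Ico, decide_eq_true_eq]; omega
  all_goals
    rw [mem_offsetPairs] at hp hq
    ext <;> omega

theorem matched_example :
    matchedWorkers (Finset.Ico 0 n) (offsetPairs 0 (2 * n) (2 * n)) = n ∧
    matchedJobs (Finset.Ico (2 * n) (3 * n)) (offsetPairs 0 (2 * n) (2 * n)) = n ∧
    matchedJobs (Finset.Ico (3 * n) (4 * n)) (offsetPairs 0 (2 * n) (2 * n)) = n := by
  refine ⟨.trans (congrArg Finset.card ?_) (card_offsetPairs 0 (2 * n) n),
    .trans (congrArg Finset.card ?_) (card_offsetPairs 0 (2 * n) n),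
    .trans (congrArg Finset.card ?_) (card_offsetPairs n (3 * n) n)⟩
  all_goals
    ext p
    simp only [Finset.mem_filter, mem_offsetPairs, Finset.mem_Ico]
    omega

end Example

/-- For every `n ≥ 1` there is a market with `|W^A| = |W^B| = |J^A| = |J^{AB}| = n`
(`W^A` workers compatible with all jobs, `W^B` workers only with `J^{AB}`) and an assignment
plan (all `W^A` workers processed first, each ranking `J^{AB}` jobs above `J^A` jobs) such
that the sequential worker-choice procedure produces a matching `μ` with `|μ| = n`, while the
matching `μ'` pairing `W^A` with `J^A` and `W^B` with `J^{AB}` has `|μ'| = 2n > n = |μ|` and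
weakly improves all high-level statistics, hence prioritizes more high-levels than `μ`:
`μ` does not prioritize high-levels. -/
theorem stmt5 (n : ℕ) (hn : 1 ≤ n) :
    ∃ (WA WB JA JAB : Finset ℕ) (C : ℕ → ℕ → Bool)
      (order : List ℕ) (pref : ℕ → List ℕ),
      WA.card = n ∧ WB.card = n ∧ JA.card = n ∧ JAB.card = n ∧
      Disjoint WA WB ∧ Disjoint JA JAB ∧
      (∀ w j, C w j = true ↔
        ((w ∈ WA ∧ (j ∈ JA ∨ j ∈ JAB)) ∨ (w ∈ WB ∧ j ∈ JAB))) ∧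
      (∃ oA oB, order = oA ++ oB ∧ Enum oA WA ∧ Enum oB WB) ∧
      (∀ w ∈ WA, ∃ l1 l2, pref w = l1 ++ l2 ∧ Enum l1 JAB ∧ Enum l2 JA) ∧
      (let μ := (greedy C order pref (JA ∪ JAB)).toFinset
       μ.card = n ∧
       ∃ M : Finset (ℕ × ℕ), IsMatching C M ∧ M.card = 2 * n ∧
         (∀ p ∈ M, p.1 ∈ WA → p.2 ∈ JA) ∧ (∀ p ∈ M, p.1 ∈ WB → p.2 ∈ JAB) ∧
         μ.card < M.card ∧
         matchedWorkers WA μ ≤ matchedWorkers WA M ∧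
         matchedJobs JA μ ≤ matchedJobs JA M ∧
         matchedJobs JAB μ ≤ matchedJobs JAB M) := by
  refine ⟨Finset.Ico 0 n, Finset.Ico n (2 * n), Finset.Ico (2 * n) (3 * n), Finset.Ico (3 * n) (4 * n),
    exampleCompat n, _, fun _ => exampleRanking n, by simp, by simp; omega, by simp; omega,
    by simp; omega, Finset.Ico_disjoint_Ico_consecutive _ _ _,
    Finset.Ico_disjoint_Ico_consecutive _ _ _, fun _ _ => decide_eq_true_iff,
    ⟨_, _, rfl, enum_range' (zero_add n), enum_range' (two_mul n).symm⟩,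
    fun _ _ => ⟨_, _, rfl, enum_range' (by omega), enum_range' (by omega)⟩, ?_⟩
  dsimp only
  rw [toFinset_greedy_example]
  obtain ⟨hWA, hJA, hJAB⟩ := matched_example n
  refine ⟨card_offsetPairs _ _ _, offsetPairs 0 (2 * n) (2 * n), isMatching_example n,
    card_offsetPairs _ _ _, ?_, ?_, by rw [card_offsetPairs, card_offsetPairs]; omega,
    (Finset.card_filter_le _ _).trans_eq ((card_offsetPairs _ _ _).trans hWA.symm),
    (Finset.card_filter_le _ _).trans_eq ((card_offsetPairs _ _ _).trans hJA.symm),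
    (Finset.card_filter_le _ _).trans_eq ((card_offsetPairs _ _ _).trans hJAB.symm)⟩
  all_goals
    intro p hp hw
    simp only [mem_offsetPairs, Finset.mem_Ico] at hp hw ⊢
    omega
end

section
/- In the setting of the First vs. Second Qing procedures (single tube, avoidance compatibility), for the prioritized greedy run the set of still-available jobs at each prioritized worker's turn under the non-prioritized run is contained in the corresponding set under the prioritized run: formally, for the k-th prioritized worker w^k (by the common order ≻^W restricted to W^P), J^{*Q1}_{w^k} ⊆ J^{*Q2}_{w^k}, where J^{*Q1}_{w} (resp. J^{*Q2}_{w}) denotes the set of unmatched jobs when w is processed under the single-tube (resp. two-tube prioritized) procedure. -/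
/-- The set of still-available jobs at worker `w`'s turn, when the greedy procedure
processes workers in `order` starting from the pool `jobs`. -/
def availAt (C : ℕ → ℕ → Bool) (pref : ℕ → List ℕ) (jobs : Finset ℕ)
    (order : List ℕ) (w : ℕ) : Finset ℕ :=
  ((order.takeWhile (fun x => x ≠ w)).foldl (greedyStep C pref) ([], jobs)).2

namespace List

variable {α : Type}

theorem find?_eq_some_of_imp {p q : α → Bool} (hpq : ∀ x, p x → q x) {l : List α} {b : α}
    (hq : l.find? q = some b) (hb : p b) : l.find? p = some b := by
  obtain ⟨-, as, bs, rfl, has⟩ := find?_eq_some_iff_append.1 hq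
  refine find?_eq_some_iff_append.2 ⟨hb, as, bs, rfl, fun a ha => ?_⟩
  simpa using mt (hpq a) (by simpa using has a ha)

theorem takeWhile_append_of_exists_not {p : α → Bool} {l₁ : List α} (h : ∃ x ∈ l₁, ¬p x)
    (l₂ : List α) : (l₁ ++ l₂).takeWhile p = l₁.takeWhile p := by
  obtain ⟨x, hx, hpx⟩ := h
  rw [takeWhile_append, if_neg]
  intro hlen
  have hself := (takeWhile_prefix p).eq_of_length hlen
  exact hpx (takeWhile_eq_self_iff.1 hself x hx)

theorem takeWhile_ne_filter_sublist [DecidableEq α] {q : α → Bool} {w : α} (hw : q w)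
    (l : List α) :
    (l.filter q).takeWhile (fun x => x ≠ w) <+ l.takeWhile (fun x => x ≠ w) := by
  have hpred : (fun x => !q x || decide (x ≠ w)) = fun x => decide (x ≠ w) := by
    funext x
    by_cases hx : x = w <;> simp [hx, hw]
  rw [takeWhile_filter, hpred]
  exact filter_sublist

end List

section Greedy

variable {W J : Type} [DecidableEq J] (C : W → J → Bool) (pref : W → List J)

theorem greedyStep_snd_subset (st : List (W × J) × Finset J) (w : W) :
    (greedyStep C pref st w).2 ⊆ st.2 := by
  unfold greedyStep
  split
  · exact Finset.erase_subset _ _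
  · exact subset_rfl

theorem greedyStep_snd_mono {s t : List (W × J) × Finset J} (hst : s.2 ⊆ t.2) (w : W) :
    (greedyStep C pref s w).2 ⊆ (greedyStep C pref t w).2 := by
  have hs := (greedyStep_snd_subset C pref s w).trans hst
  cases ht : (pref w).find? (fun j => C w j && decide (j ∈ t.2)) with
  | none => simpa [greedyStep, ht] using hs
  | some b =>
    simp only [greedyStep, ht]
    intro x hx
    refine Finset.mem_erase.2 ⟨?_, hs hx⟩
    rintro rfl
    obtain ⟨hCx, -⟩ : C w x ∧ x ∈ t.2 := by simpa using List.find?_some ht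
    have hxs : x ∈ s.2 := greedyStep_snd_subset C pref s w hx
    have hfind : (pref w).find? (fun j => C w j && decide (j ∈ s.2)) = some x :=
      List.find?_eq_some_of_imp (by simpa using fun j hj hjs => ⟨hj, hst hjs⟩) ht
        (by simpa using ⟨hCx, hxs⟩)
    simp [hfind] at hx

theorem foldl_greedyStep_snd_subset_of_sublist {l' l : List W} (h : l'.Sublist l)
    {s t : List (W × J) × Finset J} (hst : s.2 ⊆ t.2) :
    (l.foldl (greedyStep C pref) s).2 ⊆ (l'.foldl (greedyStep C pref) t).2 := by
  induction h generalizing s t with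
  | slnil => exact hst
  | cons a _ ih => exact ih ((greedyStep_snd_subset C pref s a).trans hst)
  | cons_cons a _ ih => exact ih (greedyStep_snd_mono C pref hst a)

end Greedy

theorem availAt_subset_availAt_filter_append (C : ℕ → ℕ → Bool) (pref : ℕ → List ℕ)
    (jobs : Finset ℕ) {order : List ℕ} {q : ℕ → Bool} {w : ℕ} (hwo : w ∈ order) (hw : q w)
    (rest : List ℕ) :
    availAt C pref jobs order w ⊆ availAt C pref jobs (order.filter q ++ rest) w := by
  have hwq : w ∈ order.filter q := List.mem_filter.2 ⟨hwo, hw⟩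
  unfold availAt
  rw [List.takeWhile_append_of_exists_not ⟨w, hwq, by simp⟩]
  exact foldl_greedyStep_snd_subset_of_sublist C pref
    (List.takeWhile_ne_filter_sublist hw order) subset_rfl

theorem stmt7_general (workers jobs : Finset ℕ) (rw rj : ℕ → ℕ)
    (C : ℕ → ℕ → Bool)
    (order : List ℕ) (ho : Enum order workers)
    (pref : ℕ → List ℕ)
    (WP : Finset ℕ) (hWP : WP = workers.filter fun w => ∃ j ∈ jobs, rw w = rj j) :
    ∀ w ∈ WP,
      availAt C pref jobs order w ⊆
      availAt C pref jobs
        (order.filter (fun w => decide (w ∈ WP)) ++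
         order.filter (fun w => decide (w ∉ WP))) w := by
  intro w hw
  have hwo : w ∈ order := by
    rw [← List.mem_toFinset, ho.2]
    exact (Finset.mem_filter.1 (hWP ▸ hw)).1
  exact availAt_subset_availAt_filter_append C pref jobs hwo (by simpa using hw) _

/-- Single tube of jobs with avoidance compatibility; `W^P` the workers with
some incompatible job, `W^{NP}` the rest. For every prioritized worker `w ∈ W^P`, the set of
available jobs at `w`'s turn under the single-tube run is contained in the set of available
jobs at `w`'s turn under the two-tube (prioritized) run: `J^{*Q1}_w ⊆ J^{*Q2}_w`. -/
theorem stmt7 (workers jobs : Finset ℕ) (rw rj : ℕ → ℕ)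
    (C : ℕ → ℕ → Bool) (hC : ∀ w j, C w j = true ↔ rw w ≠ rj j)
    (order : List ℕ) (ho : Enum order workers)
    (pref : ℕ → List ℕ) (hpref : ∀ w ∈ workers, Enum (pref w) jobs)
    (WP : Finset ℕ) (hWP : WP = workers.filter fun w => ∃ j ∈ jobs, rw w = rj j) :
    ∀ w ∈ WP,
      availAt C pref jobs order w ⊆
      availAt C pref jobs
        (order.filter (fun w => decide (w ∈ WP)) ++
         order.filter (fun w => decide (w ∉ WP))) w :=
  stmt7_general workers jobs rw rj C order ho pref WP hWP
end

section
/- For every n ≥ 1 there exists a regional market where the single-tube greedy procedure produces a matching strictly smaller than the prioritized two-tube procedure: with regions X, Y, Z, n workers from X, n workers from Y, n jobs from X, and n jobs from Z (compatibility: regions differ), and an order processing all Y-workers first with all workers preferring Z-jobs over X-jobs, the single-tube procedure matches only n workers while the prioritized procedure (X-workers first, since they are the only ones with a job to avoid) matches all 2n workers. -/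
theorem foldl_greedyStep_of_forall_incompatible {W J : Type} [DecidableEq J] (C : W → J → Bool)
    (pref : W → List J) (ws : List W) (acc : List (W × J)) (S : Finset J)
    (h : ∀ w ∈ ws, ∀ j ∈ S, C w j = false) :
    ws.foldl (greedyStep C pref) (acc, S) = (acc, S) := by
  induction ws with
  | nil => rfl
  | cons w ws ih =>
    have hnone : (pref w).find? (fun j => C w j && decide (j ∈ S)) = none := by
      rw [List.find?_eq_none]
      intro j _
      by_cases hj : j ∈ S <;> simp [hj, h w List.mem_cons_self j]
    rw [List.foldl_cons, greedyStep, hnone]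
    exact ih fun w' hw' => h w' (List.mem_cons_of_mem w hw')

theorem foldl_greedyStep_range {W : Type} (C : W → ℕ → Bool) (N : ℕ) (ws : List W) (m : ℕ)
    (acc : List (W × ℕ)) (hN : m + ws.length ≤ N)
    (hC : ∀ w ∈ ws, ∀ j, m ≤ j → j < m + ws.length → C w j = true) :
    ws.foldl (greedyStep C fun _ => List.range N) (acc, Finset.Ico m N) =
      (acc ++ ws.zip (List.range' m ws.length), Finset.Ico (m + ws.length) N) := by
  induction ws generalizing m acc with
  | nil => simp
  | cons w ws ih =>
    simp only [List.length_cons] at hN hC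
    have hfirst : (List.range N).find? (fun j => C w j && decide (j ∈ Finset.Ico m N)) =
        some m := by
      rw [List.find?_range_eq_some]
      refine ⟨?_, List.mem_range.2 (by omega), fun j hj => ?_⟩
      · simp [hC w List.mem_cons_self m le_rfl (by omega), show m < N by omega]
      · simp [show ¬ m ≤ j by omega]
    have herase : (Finset.Ico m N).erase m = Finset.Ico (m + 1) N := by
      ext j; simp only [Finset.mem_erase, Finset.mem_Ico]; omega
    rw [List.foldl_cons, greedyStep, hfirst]
    dsimp only
    rw [herase, ih (m + 1) _ (by omega)
      fun w' hw' j hj₁ hj₂ => hC w' (List.mem_cons_of_mem w hw') j (by omega) (by omega)]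
    simp [List.range'_succ, Nat.add_right_comm m 1, Nat.add_assoc]

theorem enum_range (n : ℕ) : Enum (List.range n) (Finset.range n) :=
  ⟨List.nodup_range, by ext; simp⟩

theorem enum_range'_s8 (a k : ℕ) : Enum (List.range' a k) (Finset.Ico a (a + k)) :=
  ⟨List.nodup_range', by ext; simp⟩

namespace TwoTubeExample

/-- Regions are encoded as `0 = X`, `1 = Y`, `2 = Z`: the workers `0, …, n - 1` are from X and
`n, …, 2n - 1` from Y, the jobs `0, …, n - 1` are from Z and `n, …, 2n - 1` from X. -/
def workerRegion (n w : ℕ) : Fin 3 := if w < n then 0 else 1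

def jobRegion (n j : ℕ) : Fin 3 := if j < n then 2 else 0

def compatible (n w j : ℕ) : Bool :=
  decide (w < 2 * n ∧ j < 2 * n ∧ workerRegion n w ≠ jobRegion n j)

def order (n : ℕ) : List ℕ := List.range' n n ++ List.range n

theorem compatible_eq_true_iff (n w j : ℕ) :
    compatible n w j = true ↔ w ∈ Finset.range (2 * n) ∧ j ∈ Finset.range (2 * n) ∧
      workerRegion n w ≠ jobRegion n j := by
  simp [compatible]

theorem compatible_eq_true_of_le {n w j : ℕ} (hw : n ≤ w) (hw₂ : w < 2 * n) (hj : j < 2 * n) :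
    compatible n w j = true := by
  by_cases hj₁ : j < n <;>
    simp [compatible, workerRegion, jobRegion, hw₂, hj, hj₁, not_lt.2 hw]

theorem compatible_eq_true_of_lt {n w j : ℕ} (hw : w < n) (hj : j < n) :
    compatible n w j = true := by
  simp [compatible, workerRegion, jobRegion, hw, hj]; omega

theorem compatible_eq_false_of_lt_of_le {n w j : ℕ} (hw : w < n) (hj : n ≤ j) :
    compatible n w j = false := by
  simp [compatible, workerRegion, jobRegion, hw, not_lt.2 hj]

theorem filter_workerRegion_eq_zero (n : ℕ) :
    (Finset.range (2 * n)).filter (fun w => workerRegion n w = 0) = Finset.range n := by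
  ext w; simp [workerRegion]; omega

theorem filter_workerRegion_eq_one (n : ℕ) :
    (Finset.range (2 * n)).filter (fun w => workerRegion n w = 1) = Finset.Ico n (2 * n) := by
  ext w; simp [workerRegion]; omega

theorem filter_jobRegion_eq_two (n : ℕ) :
    (Finset.range (2 * n)).filter (fun j => jobRegion n j = 2) = Finset.range n := by
  ext j; simp [jobRegion]; omega

theorem filter_jobRegion_eq_zero (n : ℕ) :
    (Finset.range (2 * n)).filter (fun j => jobRegion n j = 0) = Finset.Ico n (2 * n) := by
  ext j; simp [jobRegion]; omega

theorem order_filter_workerRegion_eq_zero (n : ℕ) :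
    (order n).filter (fun w => decide (workerRegion n w = 0)) = List.range n := by
  rw [order, List.filter_append, List.filter_eq_nil_iff.2, List.filter_eq_self.2] <;>
    simp +contextual [workerRegion]

theorem order_filter_workerRegion_ne_zero (n : ℕ) :
    (order n).filter (fun w => decide (workerRegion n w ≠ 0)) = List.range' n n := by
  rw [order, List.filter_append, List.filter_eq_self.2, List.filter_eq_nil_iff.2] <;>
    simp +contextual [workerRegion]

theorem range_two_mul (n : ℕ) : List.range (2 * n) = List.range n ++ List.range' n n := by
  simpa [two_mul, List.range_eq_range'] using
    (List.range'_append_1 (s := 0) (m := n) (n := n)).symm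

theorem length_greedy_order (n : ℕ) :
    (greedy (compatible n) (order n) (fun _ => List.range (2 * n)) (Finset.range (2 * n))).length
      = n := by
  have hY := foldl_greedyStep_range (compatible n) (2 * n) (List.range' n n) 0 [] (by simp; omega)
    fun w hw j _ hj => by
      simp at hw hj; exact compatible_eq_true_of_le hw.1 (by omega) (by omega)
  have hX := foldl_greedyStep_of_forall_incompatible (compatible n) (fun _ => List.range (2 * n))
    (List.range n) ([] ++ (List.range' n n).zip (List.range' 0 n)) (Finset.Ico n (2 * n))
    (by intro w hw j hj; simp at hw hj; exact compatible_eq_false_of_lt_of_le hw hj.1)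
  simp only [List.length_range', zero_add] at hY
  rw [greedy, order, Finset.range_eq_Ico, List.foldl_append, hY, hX]
  simp

theorem length_greedy_prioritized (n : ℕ) :
    (greedy (compatible n) (List.range n ++ List.range' n n) (fun _ => List.range (2 * n))
      (Finset.range (2 * n))).length = 2 * n := by
  have hX := foldl_greedyStep_range (compatible n) (2 * n) (List.range n) 0 [] (by simp; omega)
    (by intro w hw j _ hj; simp at hw hj; exact compatible_eq_true_of_lt hw hj)
  have hY := foldl_greedyStep_range (compatible n) (2 * n) (List.range' n n) n
    ([] ++ (List.range n).zip (List.range' 0 n)) (by simp; omega)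
    fun w hw j _ hj => by
      simp at hw hj; exact compatible_eq_true_of_le hw.1 (by omega) (by omega)
  simp only [List.length_range, List.length_range', zero_add] at hX hY
  rw [greedy, Finset.range_eq_Ico, List.foldl_append, hX, hY]
  simp; omega

end TwoTubeExample

open TwoTubeExample in
theorem stmt8_general (n : ℕ) :
    ∃ (workers jobs : Finset ℕ) (rw rj : ℕ → Fin 3) (C : ℕ → ℕ → Bool)
      (order : List ℕ) (pref : ℕ → List ℕ),
      (workers.filter fun w => rw w = 0).card = n ∧
      (workers.filter fun w => rw w = 1).card = n ∧
      workers.card = 2 * n ∧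
      (jobs.filter fun j => rj j = 0).card = n ∧
      (jobs.filter fun j => rj j = 2).card = n ∧
      jobs.card = 2 * n ∧
      (∀ w j, C w j = true ↔ (w ∈ workers ∧ j ∈ jobs ∧ rw w ≠ rj j)) ∧
      (∃ oY oX, order = oY ++ oX ∧
        Enum oY (workers.filter fun w => rw w = 1) ∧
        Enum oX (workers.filter fun w => rw w = 0)) ∧
      (∀ w ∈ workers, ∃ lZ lX, pref w = lZ ++ lX ∧
        Enum lZ (jobs.filter fun j => rj j = 2) ∧
        Enum lX (jobs.filter fun j => rj j = 0)) ∧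
      (greedy C order pref jobs).length = n ∧
      (greedy C
        (order.filter (fun w => decide (rw w = 0)) ++
         order.filter (fun w => decide (rw w ≠ 0)))
        pref jobs).length = 2 * n := by
  have hIco : Enum (List.range' n n) (Finset.Ico n (2 * n)) := two_mul n ▸ enum_range'_s8 n n
  refine ⟨Finset.range (2 * n), Finset.range (2 * n), workerRegion n, jobRegion n, compatible n,
    TwoTubeExample.order n, fun _ => List.range (2 * n), ?_, ?_, Finset.card_range _, ?_, ?_,
    Finset.card_range _, compatible_eq_true_iff n, ⟨List.range' n n, List.range n, rfl, ?_, ?_⟩,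
    fun _ _ => ⟨List.range n, List.range' n n, range_two_mul n, ?_, ?_⟩,
    length_greedy_order n, ?_⟩
  · rw [filter_workerRegion_eq_zero, Finset.card_range]
  · rw [filter_workerRegion_eq_one, Nat.card_Ico]; omega
  · rw [filter_jobRegion_eq_zero, Nat.card_Ico]; omega
  · rw [filter_jobRegion_eq_two, Finset.card_range]
  · rw [filter_workerRegion_eq_one]; exact hIco
  · rw [filter_workerRegion_eq_zero]; exact enum_range n
  · rw [filter_jobRegion_eq_two]; exact enum_range n
  · rw [filter_jobRegion_eq_zero]; exact hIco
  · rw [order_filter_workerRegion_eq_zero, order_filter_workerRegion_ne_zero]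
    exact length_greedy_prioritized n

/-- For every `n ≥ 1` there is a regional market (regions `0 = X`, `1 = Y`,
`2 = Z`) with `n` X-workers, `n` Y-workers, `n` X-jobs and `n` Z-jobs (compatibility: regions
differ), an order processing all Y-workers first, and preferences ranking Z-jobs above
X-jobs, on which the single-tube greedy procedure matches only `n` workers, while the
prioritized procedure (X-workers — the only workers with a job to avoid — first) matches all
`2n` workers. -/
theorem stmt8 (n : ℕ) (hn : 1 ≤ n) :
    ∃ (workers jobs : Finset ℕ) (rw rj : ℕ → Fin 3) (C : ℕ → ℕ → Bool)
      (order : List ℕ) (pref : ℕ → List ℕ),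
      (workers.filter fun w => rw w = 0).card = n ∧
      (workers.filter fun w => rw w = 1).card = n ∧
      workers.card = 2 * n ∧
      (jobs.filter fun j => rj j = 0).card = n ∧
      (jobs.filter fun j => rj j = 2).card = n ∧
      jobs.card = 2 * n ∧
      (∀ w j, C w j = true ↔ (w ∈ workers ∧ j ∈ jobs ∧ rw w ≠ rj j)) ∧
      (∃ oY oX, order = oY ++ oX ∧
        Enum oY (workers.filter fun w => rw w = 1) ∧
        Enum oX (workers.filter fun w => rw w = 0)) ∧
      (∀ w ∈ workers, ∃ lZ lX, pref w = lZ ++ lX ∧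
        Enum lZ (jobs.filter fun j => rj j = 2) ∧
        Enum lX (jobs.filter fun j => rj j = 0)) ∧
      (greedy C order pref jobs).length = n ∧
      (greedy C
        (order.filter (fun w => decide (rw w = 0)) ++
         order.filter (fun w => decide (rw w ≠ 0)))
        pref jobs).length = 2 * n :=
  stmt8_general n
end

section
/- For every n ≥ 1 there exists a market and assignment plan on which a procedure that does NOT partition jobs by eligibility (e.g., worker choice or single-tube random draw, processing all Y-region W^A workers first with J^{AB}_X jobs ranked above J^A_Z jobs) matches all 2n workers, while the eligibility-partitioned procedures (pairing W^A_Y exclusively with J^A_Z and W^A_X exclusively with J^{AB}_X) leave n workers and n jobs unmatched: the market has n W^A workers from region X, n W^A workers from region Y, n J^{AB} jobs from region X, and n J^A jobs from region Z, with compatibility requiring both eligibility and region(w) ≠ region(j). -/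
/-! In the unpartitioned procedure the `Y`-workers come first and rank the `X`-jobs first, so
they take all of them; the `Z`-jobs left over are acceptable to the `X`-workers, and everyone is
matched. In the partitioned procedure the `X`-workers only see `X`-jobs, which the rule of
avoidance forbids them. -/

section Greedy

variable {W J : Type} [DecidableEq J]

theorem List.exists_mem_find?_append_eq_some {α : Type} {p : α → Bool} {l₁ l₂ : List α} {a : α}
    (ha : a ∈ l₁) (hp : p a = true) : ∃ b ∈ l₁, p b = true ∧ (l₁ ++ l₂).find? p = some b := by
  obtain ⟨b, hb⟩ := Option.isSome_iff_exists.mp (List.find?_isSome.mpr ⟨a, ha, hp⟩)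
  exact ⟨b, List.mem_of_find?_eq_some hb, List.find?_some hb, by rw [List.find?_append, hb]; rfl⟩

def RanksFirst (pref : W → List J) (A : Finset J) (w : W) : Prop :=
  ∃ l₁ l₂, pref w = l₁ ++ l₂ ∧ l₁.toFinset = A

variable (C : W → J → Bool) (pref : W → List J)

theorem greedyStep_of_find?_eq_some {M : List (W × J)} {T : Finset J} {w : W} {j : J}
    (h : (pref w).find? (fun j => C w j && decide (j ∈ T)) = some j) :
    greedyStep C pref (M, T) w = (M ++ [(w, j)], T.erase j) := by
  simp [greedyStep, h]

theorem foldl_greedyStep_eq_self (order : List W) (M : List (W × J)) (T : Finset J)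
    (h : ∀ w ∈ order, ∀ j ∈ pref w, C w j = true → j ∉ T) :
    order.foldl (greedyStep C pref) (M, T) = (M, T) := by
  induction order with
  | nil => rfl
  | cons w ws ih =>
    have hnone : (pref w).find? (fun j => C w j && decide (j ∈ T)) = none :=
      List.find?_eq_none.mpr fun j hj hCj => by
        simp only [Bool.and_eq_true, decide_eq_true_eq] at hCj
        exact h w List.mem_cons_self j hj hCj.1 hCj.2
    rw [List.foldl_cons, show greedyStep C pref (M, T) w = (M, T) by simp [greedyStep, hnone]]
    exact ih fun w' hw' => h w' (List.mem_cons_of_mem w hw')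

theorem foldl_greedyStep_of_ranksFirst (A : Finset J) (order : List W) (M : List (W × J))
    (T : Finset J) (hpref : ∀ w ∈ order, RanksFirst pref A w)
    (hC : ∀ w ∈ order, ∀ j ∈ T ∩ A, C w j = true) (hcard : order.length ≤ (T ∩ A).card) :
    ∃ M' S, order.foldl (greedyStep C pref) (M, T) = (M ++ M', T \ S) ∧
      M'.length = order.length ∧ S ⊆ T ∩ A ∧ S.card = order.length := by
  induction order generalizing M T with
  | nil => exact ⟨[], ∅, by simp, rfl, Finset.empty_subset _, rfl⟩
  | cons w ws ih =>
    obtain ⟨j₀, hj₀⟩ : (T ∩ A).Nonempty := by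
      rw [← Finset.card_pos]; simp only [List.length_cons] at hcard; omega
    obtain ⟨l₁, l₂, hw, hl₁⟩ := hpref w List.mem_cons_self
    have hj₀l₁ : j₀ ∈ l₁ := by rw [← List.mem_toFinset, hl₁]; exact (Finset.mem_inter.mp hj₀).2
    -- `j₀` is an available compatible job in the top segment `l₁`, so the search stops there.
    obtain ⟨j, hjl₁, hj, hfind⟩ := List.exists_mem_find?_append_eq_some (l₂ := l₂) hj₀l₁
      (p := fun j => C w j && decide (j ∈ T))
      (by simp [hC w List.mem_cons_self j₀ hj₀, (Finset.mem_inter.mp hj₀).1])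
    simp only [Bool.and_eq_true, decide_eq_true_eq] at hj
    have hjTA : j ∈ T ∩ A := Finset.mem_inter.mpr ⟨hj.2, hl₁ ▸ List.mem_toFinset.mpr hjl₁⟩
    obtain ⟨M', S, hfold, hM', hS, hScard⟩ := ih (M ++ [(w, j)]) (T.erase j)
      (fun w' hw' => hpref w' (List.mem_cons_of_mem w hw'))
      (fun w' hw' j' hj' => hC w' (List.mem_cons_of_mem w hw') j'
        (Finset.inter_subset_inter_right (Finset.erase_subset j T) hj'))
      (by rw [Finset.erase_inter, Finset.card_erase_of_mem hjTA]
          simp only [List.length_cons] at hcard; omega)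
    have hjS : j ∉ S := fun h => by simpa using (Finset.inter_subset_left (hS h))
    refine ⟨(w, j) :: M', insert j S, ?_, by simp [hM'], ?_, ?_⟩
    · rw [List.foldl_cons, greedyStep_of_find?_eq_some C pref (hw ▸ hfind), hfold,
        Finset.sdiff_insert, Finset.erase_sdiff_comm]
      simp
    · exact Finset.insert_subset hjTA
        (hS.trans (Finset.inter_subset_inter_right (Finset.erase_subset j T)))
    · rw [Finset.card_insert_of_notMem hjS, hScard, List.length_cons]

end Greedy

namespace AvoidanceMarket

def block (n k : ℕ) : Finset ℕ := Finset.Ico (k * n) (k * n + n)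

def blockList (n k : ℕ) : List ℕ := List.range' (k * n) n

variable {n : ℕ}

theorem mem_block {k m : ℕ} : m ∈ block n k ↔ k * n ≤ m ∧ m < k * n + n := Finset.mem_Ico

theorem card_block (k : ℕ) : (block n k).card = n := by simp [block]

theorem enum_blockList (k : ℕ) : Enum (blockList n k) (block n k) :=
  ⟨List.nodup_range' .., by ext; simp [block, blockList]⟩

theorem mem_blockList {k m : ℕ} : m ∈ blockList n k ↔ m ∈ block n k := by
  rw [← (enum_blockList k).2, List.mem_toFinset]

theorem disjoint_block_succ (k : ℕ) : Disjoint (block n k) (block n (k + 1)) := by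
  rw [Finset.disjoint_left]
  intro m h h'
  rw [mem_block] at h h'
  rw [Nat.succ_mul] at h'
  omega

/-- Regions are `0 = X`, `1 = Y`, `2 = Z`; the four blocks `0, 1, 2, 3` hold the `X`-workers,
the `Y`-workers, the `X`-jobs and the `Z`-jobs. -/
def workerRegion (n w : ℕ) : Fin 3 := if w < n then 0 else 1

def jobRegion (n j : ℕ) : Fin 3 := if j < 3 * n then 0 else 2

def compat (n w j : ℕ) : Bool :=
  decide (w ∈ block n 0 ∪ block n 1 ∧ j ∈ block n 2 ∪ block n 3 ∧
    workerRegion n w ≠ jobRegion n j)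

def pref (n : ℕ) (_ : ℕ) : List ℕ := blockList n 2 ++ blockList n 3

theorem workerRegion_of_mem_block_zero {w : ℕ} (hw : w ∈ block n 0) : workerRegion n w = 0 := by
  rw [mem_block] at hw; simp [workerRegion]; omega

theorem workerRegion_of_mem_block_one {w : ℕ} (hw : w ∈ block n 1) : workerRegion n w = 1 := by
  rw [mem_block] at hw; simp [workerRegion]; omega

theorem jobRegion_of_mem_block_two {j : ℕ} (hj : j ∈ block n 2) : jobRegion n j = 0 := by
  rw [mem_block] at hj; simp [jobRegion]; omega

theorem jobRegion_of_mem_block_three {j : ℕ} (hj : j ∈ block n 3) : jobRegion n j = 2 := by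
  rw [mem_block] at hj; simp [jobRegion]; omega

theorem compat_of_mem_block_one {w j : ℕ} (hw : w ∈ block n 1) (hj : j ∈ block n 2 ∪ block n 3) :
    compat n w j = true := by
  have hY := workerRegion_of_mem_block_one hw
  refine decide_eq_true ⟨Finset.mem_union_right _ hw, hj, ?_⟩
  rcases Finset.mem_union.mp hj with hj | hj
  · rw [hY, jobRegion_of_mem_block_two hj]; decide
  · rw [hY, jobRegion_of_mem_block_three hj]; decide

theorem compat_of_mem_block_three {w j : ℕ} (hw : w ∈ block n 0 ∪ block n 1)
    (hj : j ∈ block n 3) : compat n w j = true := by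
  refine decide_eq_true ⟨hw, Finset.mem_union_right _ hj, ?_⟩
  rw [jobRegion_of_mem_block_three hj]
  rcases Finset.mem_union.mp hw with hw | hw
  · rw [workerRegion_of_mem_block_zero hw]; decide
  · rw [workerRegion_of_mem_block_one hw]; decide

theorem compat_of_mem_block_zero_of_mem_block_two {w j : ℕ} (hw : w ∈ block n 0)
    (hj : j ∈ block n 2) : compat n w j = false := by
  refine decide_eq_false fun h => h.2.2 ?_
  rw [workerRegion_of_mem_block_zero hw, jobRegion_of_mem_block_two hj]

theorem ranksFirst_block_two (w : ℕ) : RanksFirst (pref n) (block n 2) w :=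
  ⟨_, _, rfl, (enum_blockList 2).2⟩

theorem ranksFirst_block_two_union_block_three (w : ℕ) :
    RanksFirst (pref n) (block n 2 ∪ block n 3) w :=
  ⟨_, [], (List.append_nil _).symm,
    by rw [pref, List.toFinset_append, (enum_blockList 2).2, (enum_blockList 3).2]⟩

theorem foldl_greedyStep_block_three {k : ℕ} (hk : k ≤ 1) (M : List (ℕ × ℕ)) :
    ∃ M' S, (blockList n k).foldl (greedyStep (compat n) (pref n)) (M, block n 3) = (M ++ M', S) ∧
      M'.length = n := by
  have hw : ∀ w ∈ blockList n k, w ∈ block n 0 ∪ block n 1 := fun w hw => by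
    rw [mem_blockList] at hw
    rcases Nat.le_one_iff_eq_zero_or_eq_one.mp hk with rfl | rfl <;> simp [hw]
  have hpool : block n 3 ∩ (block n 2 ∪ block n 3) = block n 3 :=
    Finset.inter_eq_left.mpr Finset.subset_union_right
  obtain ⟨M', S, hfold, hM', -⟩ := foldl_greedyStep_of_ranksFirst (compat n) (pref n)
    (block n 2 ∪ block n 3) (blockList n k) M (block n 3)
    (fun w _ => ranksFirst_block_two_union_block_three w)
    (fun w hw' j hj => compat_of_mem_block_three (hw w hw') (Finset.mem_of_mem_inter_left hj))
    (by rw [hpool, card_block, blockList, List.length_range'])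
  exact ⟨M', _, hfold, by rw [hM', blockList, List.length_range']⟩

theorem length_greedy_unpartitioned :
    (greedy (compat n) (blockList n 1 ++ blockList n 0) (pref n) (block n 2 ∪ block n 3)).length =
      2 * n := by
  obtain ⟨M, S, hfold, hM, hS, hScard⟩ := foldl_greedyStep_of_ranksFirst (compat n) (pref n)
    (block n 2) (blockList n 1) [] (block n 2 ∪ block n 3) (fun w _ => ranksFirst_block_two w)
    (fun w hw j hj =>
      compat_of_mem_block_one (mem_blockList.mp hw) (Finset.mem_of_mem_inter_left hj))
    (by rw [Finset.union_inter_cancel_left, card_block, blockList, List.length_range'])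
  have hSX : S = block n 2 := Finset.eq_of_subset_of_card_le (hS.trans Finset.inter_subset_right)
    (by rw [hScard, card_block, blockList, List.length_range'])
  obtain ⟨M', S', hfold', hM'⟩ := foldl_greedyStep_block_three (n := n) zero_le_one ([] ++ M)
  rw [greedy, List.foldl_append, hfold, hSX,
    Finset.union_sdiff_cancel_left (disjoint_block_succ 2), hfold',
    List.nil_append, List.length_append, hM, hM', blockList, List.length_range', two_mul]

theorem length_greedy_tube_Y :
    (greedy (compat n) (blockList n 1) (pref n) (block n 3)).length = n := by
  obtain ⟨M, S, hfold, hM⟩ := foldl_greedyStep_block_three (n := n) le_rfl []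
  rw [greedy, hfold, List.nil_append, hM]

theorem greedy_tube_X_eq_nil : greedy (compat n) (blockList n 0) (pref n) (block n 2) = [] := by
  rw [greedy, foldl_greedyStep_eq_self]
  intro w hw j _ hC
  exact fun hj => Bool.false_ne_true
    (compat_of_mem_block_zero_of_mem_block_two (mem_blockList.mp hw) hj ▸ hC)

end AvoidanceMarket

open AvoidanceMarket

theorem stmt15_general (n : ℕ) :
    ∃ (WAX WAY JABX JAZ : Finset ℕ) (rw rj : ℕ → Fin 3) (C : ℕ → ℕ → Bool)
      (oY oX : List ℕ) (pref : ℕ → List ℕ),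
      WAX.card = n ∧ WAY.card = n ∧ JABX.card = n ∧ JAZ.card = n ∧
      Disjoint WAX WAY ∧ Disjoint JABX JAZ ∧
      (∀ w ∈ WAX, rw w = 0) ∧ (∀ w ∈ WAY, rw w = 1) ∧
      (∀ j ∈ JABX, rj j = 0) ∧ (∀ j ∈ JAZ, rj j = 2) ∧
      (∀ w j, C w j = true ↔ (w ∈ WAX ∪ WAY ∧ j ∈ JABX ∪ JAZ ∧ rw w ≠ rj j)) ∧
      Enum oY WAY ∧ Enum oX WAX ∧
      (∀ w ∈ WAX ∪ WAY, ∃ l1 l2, pref w = l1 ++ l2 ∧ Enum l1 JABX ∧ Enum l2 JAZ) ∧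
      (greedy C (oY ++ oX) pref (JABX ∪ JAZ)).length = 2 * n ∧
      (greedy C oY pref JAZ).length = n ∧
      (greedy C oX pref JABX).length = 0 := by
  refine ⟨block n 0, block n 1, block n 2, block n 3, workerRegion n, jobRegion n, compat n,
    blockList n 1, blockList n 0, pref n, card_block 0, card_block 1, card_block 2, card_block 3,
    disjoint_block_succ 0, disjoint_block_succ 2,
    fun _ => workerRegion_of_mem_block_zero, fun _ => workerRegion_of_mem_block_one,
    fun _ => jobRegion_of_mem_block_two, fun _ => jobRegion_of_mem_block_three,
    fun _ _ => decide_eq_true_iff, enum_blockList 1, enum_blockList 0,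
    fun _ _ => ⟨_, _, rfl, enum_blockList 2, enum_blockList 3⟩, length_greedy_unpartitioned,
    length_greedy_tube_Y, by rw [greedy_tube_X_eq_nil, List.length_nil]⟩

/-- For every `n ≥ 1` there is a market (regions `0 = X`, `1 = Y`, `2 = Z`) with
`n` A-category workers from X, `n` A-category workers from Y, `n` AB-jobs from X and `n`
A-jobs from Z, all workers eligible for all jobs, compatibility additionally requiring
differing regions. The unpartitioned greedy procedure (Y-workers first, `J^{AB}_X` jobs
ranked above `J^A_Z` jobs) matches all `2n` workers, while the eligibility-partitioned
procedure (tube `W^A_Y` with `J^A_Z`, tube `W^A_X` with `J^{AB}_X`) matches only the `n`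
workers of the first tube, leaving `n` workers and `n` jobs unmatched. -/
theorem stmt15 (n : ℕ) (hn : 1 ≤ n) :
    ∃ (WAX WAY JABX JAZ : Finset ℕ) (rw rj : ℕ → Fin 3) (C : ℕ → ℕ → Bool)
      (oY oX : List ℕ) (pref : ℕ → List ℕ),
      WAX.card = n ∧ WAY.card = n ∧ JABX.card = n ∧ JAZ.card = n ∧
      Disjoint WAX WAY ∧ Disjoint JABX JAZ ∧
      (∀ w ∈ WAX, rw w = 0) ∧ (∀ w ∈ WAY, rw w = 1) ∧
      (∀ j ∈ JABX, rj j = 0) ∧ (∀ j ∈ JAZ, rj j = 2) ∧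
      (∀ w j, C w j = true ↔ (w ∈ WAX ∪ WAY ∧ j ∈ JABX ∪ JAZ ∧ rw w ≠ rj j)) ∧
      Enum oY WAY ∧ Enum oX WAX ∧
      (∀ w ∈ WAX ∪ WAY, ∃ l1 l2, pref w = l1 ++ l2 ∧ Enum l1 JABX ∧ Enum l2 JAZ) ∧
      (greedy C (oY ++ oX) pref (JABX ∪ JAZ)).length = 2 * n ∧
      (greedy C oY pref JAZ).length = n ∧
      (greedy C oX pref JABX).length = 0 :=
  stmt15_general n
end
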